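/- Every lcH-slender group is torsion free. -/

import Mathlib

/-! Common setup: Artin groups of edge-labeled finite simplicial graphs,
parabolic subgroups, Coxeter groups, tree actions, slenderness, median graphs. -/

/-- The conjugate `g P g⁻¹` of a subgroup `P`. -/
def conjSub {H : Type} [Group H] (g : H) (P : Subgroup H) : Subgroup H :=
  P.map (MulAut.conj g).toMonoidHom

/-- A finite simplicial graph with edges labeled by integers `≥ 2`. -/
structure LabeledGraph where
  V : Type
  [fintypeV : Fintype V]
  Adj : V → V → Prop
  symm : ∀ {v w : V}, Adj v w → Adj w v
  loopless : ∀ v : V, ¬ Adj v v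
  m : V → V → ℕ
  m_symm : ∀ v w : V, m v w = m w v
  two_le_m : ∀ {v w : V}, Adj v w → 2 ≤ m v w

attribute [instance] LabeledGraph.fintypeV

namespace LabeledGraph

variable (G : LabeledGraph)

/-- The alternating word `v w v w ⋯` with `n` letters, as an element of the free group. -/
def altWord : G.V → G.V → ℕ → FreeGroup G.V
  | _, _, 0 => 1
  | v, w, Nat.succ n => FreeGroup.of v * altWord w v n

/-- The Artin relators `(v w v ⋯)(w v w ⋯)⁻¹` (with `m v w` letters in each factor). -/
def artinRels : Set (FreeGroup G.V) :=
  { r | ∃ v w : G.V, G.Adj v w ∧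
      r = G.altWord v w (G.m v w) * (G.altWord w v (G.m v w))⁻¹ }

/-- The Artin group `A_Γ` of the labeled graph. -/
abbrev ArtinGroup := PresentedGroup G.artinRels

/-- The standard generator of `A_Γ` corresponding to a vertex. -/
def agen (v : G.V) : G.ArtinGroup := PresentedGroup.of v

/-- The standard parabolic subgroup `A_X` generated by the vertices in `X`. -/
def aparabolic (X : Set G.V) : Subgroup G.ArtinGroup :=
  Subgroup.closure (G.agen '' X)

lemma aparabolic_mono {X Y : Set G.V} (h : X ⊆ Y) : G.aparabolic X ≤ G.aparabolic Y :=
  Subgroup.closure_mono (Set.image_mono h)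

/-- A parabolic subgroup is a conjugate of a standard parabolic subgroup. -/
def IsParabolic (P : Subgroup G.ArtinGroup) : Prop :=
  ∃ (g : G.ArtinGroup) (X : Set G.V), P = conjSub g (G.aparabolic X)

/-- A subset of vertices is free of infinity if any two distinct vertices of it are adjacent. -/
def FreeOfInfinity (X : Set G.V) : Prop :=
  ∀ v ∈ X, ∀ w ∈ X, v ≠ w → G.Adj v w

/-- A complete parabolic subgroup: a conjugate of a standard parabolic subgroup `A_X`
with `X` free of infinity. -/
def IsCompleteParabolic (P : Subgroup G.ArtinGroup) : Prop :=
  ∃ (g : G.ArtinGroup) (X : Set G.V),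
    G.FreeOfInfinity X ∧ P = conjSub g (G.aparabolic X)

/-- A parabolic subgroup of the standard parabolic subgroup `A_Y`:
a conjugate, by an element of `A_Y`, of a standard parabolic `A_X` with `X ⊆ Y`. -/
def IsParabolicIn (Y : Set G.V) (P : Subgroup G.ArtinGroup) : Prop :=
  ∃ g ∈ G.aparabolic Y, ∃ X ⊆ Y, P = conjSub g (G.aparabolic X)

/-- Property (Int): for each free-of-infinity subset `Y` and all parabolic subgroups
`P₁, P₂` of `A_Y`, the intersection `P₁ ⊓ P₂` is a parabolic subgroup of `A_Y`. -/
def PropInt : Prop :=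
  ∀ Y : Set G.V, G.FreeOfInfinity Y →
    ∀ P₁ P₂ : Subgroup G.ArtinGroup,
      G.IsParabolicIn Y P₁ → G.IsParabolicIn Y P₂ → G.IsParabolicIn Y (P₁ ⊓ P₂)

/-- Property (Int+−): the intersection of a complete parabolic subgroup with any
parabolic subgroup is parabolic. -/
def PropIntPM : Prop :=
  ∀ P₁ P₂ : Subgroup G.ArtinGroup,
    G.IsCompleteParabolic P₁ → G.IsParabolic P₂ → G.IsParabolic (P₁ ⊓ P₂)

/-- Property (Int++): the intersection of any two parabolic subgroups is parabolic. -/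
def PropIntPP : Prop :=
  ∀ P₁ P₂ : Subgroup G.ArtinGroup,
    G.IsParabolic P₁ → G.IsParabolic P₂ → G.IsParabolic (P₁ ⊓ P₂)

/-- The Coxeter relators: the Artin relators together with the squares of the generators. -/
def coxRels : Set (FreeGroup G.V) :=
  G.artinRels ∪ { r | ∃ v : G.V, r = FreeGroup.of v * FreeGroup.of v }

/-- The Coxeter group `W_Γ` associated to `A_Γ`. -/
abbrev CoxGroup := PresentedGroup G.coxRels

/-- The standard generator of `W_Γ` corresponding to a vertex. -/
def cgen (v : G.V) : G.CoxGroup := PresentedGroup.of v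

/-- The standard parabolic subgroup `W_X` of the Coxeter group. -/
def cparabolic (X : Set G.V) : Subgroup G.CoxGroup :=
  Subgroup.closure (G.cgen '' X)

/-- The word length of an element of the Coxeter group with respect to the
standard generators. -/
noncomputable def clength (g : G.CoxGroup) : ℕ :=
  sInf { n | ∃ w : List G.V, w.length = n ∧ (w.map G.cgen).prod = g }

/-- `A_X` is of spherical type when the Coxeter group `W_X` is finite. -/
def SphericalType (X : Set G.V) : Prop :=
  ((G.cparabolic X : Set G.CoxGroup)).Finite

/-- `A_Γ` is of FC-type if every complete standard parabolic subgroup is of spherical type. -/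
def FCType : Prop :=
  ∀ X : Set G.V, G.FreeOfInfinity X → G.SphericalType X

/-- `P` is a minimal parabolic subgroup containing `B` (the parabolic closure of `B`,
when it is unique). -/
def IsPC (B : Set G.ArtinGroup) (P : Subgroup G.ArtinGroup) : Prop :=
  G.IsParabolic P ∧ B ⊆ (P : Set G.ArtinGroup) ∧
    ∀ Q : Subgroup G.ArtinGroup, G.IsParabolic Q → B ⊆ (Q : Set G.ArtinGroup) →
      Q ≤ P → Q = P

end LabeledGraph

section TreesAndActions

variable {Γ : Type} [Group Γ]

/-- The action `ψ` preserves the adjacency relation of the graph `T`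
(i.e. it is an action by graph automorphisms). -/
def PreservesAdj {V : Type} (T : SimpleGraph V) (ψ : Γ →* Equiv.Perm V) : Prop :=
  ∀ (g : Γ) (v w : V), T.Adj v w → T.Adj (ψ g v) (ψ g w)

/-- The action `ψ` is without inversion: no element swaps the endpoints of an edge. -/
def NoInversion {V : Type} (T : SimpleGraph V) (ψ : Γ →* Equiv.Perm V) : Prop :=
  ∀ (g : Γ) (v w : V), T.Adj v w → ¬ (ψ g v = w ∧ ψ g w = v)

end TreesAndActions

/-- Property FA: every simplicial action without inversion on a simplicial tree
has a global fixed vertex. -/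
def HasFA (Γ : Type) [Group Γ] : Prop :=
  ∀ (V : Type) (T : SimpleGraph V), T.IsTree →
    ∀ ψ : Γ →* Equiv.Perm V, PreservesAdj T ψ → NoInversion T ψ →
      ∃ v : V, ∀ g : Γ, ψ g v = v

/-- Property FA′: every simplicial action without inversion on a simplicial tree is
locally elliptic, i.e. every element fixes a vertex. -/
def HasFA' (Γ : Type) [Group Γ] : Prop :=
  ∀ (V : Type) (T : SimpleGraph V), T.IsTree →
    ∀ ψ : Γ →* Equiv.Perm V, PreservesAdj T ψ → NoInversion T ψ →
      ∀ g : Γ, ∃ v : V, ψ g v = v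

/-- A (discrete) group `H` is lcH-slender if every abstract group homomorphism from a
locally compact Hausdorff topological group to `H` is continuous (w.r.t. the discrete
topology `⊥` on `H`). -/
def LcHSlender (H : Type) [Group H] : Prop :=
  ∀ (L : Type) [tL : TopologicalSpace L] [Group L] [IsTopologicalGroup L]
    [LocallyCompactSpace L] [T2Space L],
    ∀ f : L →* H, @Continuous L H tL ⊥ ⇑f

/-- The `n`-dimensional hypercube graph. -/
def HypercubeGraph (n : ℕ) : SimpleGraph (Fin n → Bool) where
  Adj x y := ∃! i, x i ≠ y i
  symm := ⟨by
    rintro x y ⟨i, hi, hu⟩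
    exact ⟨i, hi.symm, fun j hj => hu j hj.symm⟩⟩
  loopless := ⟨by
    rintro x ⟨i, hi, -⟩
    exact hi rfl⟩

/-- `w` is a median of the triple `x y z` in the graph `T`. -/
def IsMedianVertex {V : Type} (T : SimpleGraph V) (x y z w : V) : Prop :=
  T.dist x w + T.dist w y = T.dist x y ∧
  T.dist y w + T.dist w z = T.dist y z ∧
  T.dist x w + T.dist w z = T.dist x z

/-- A median graph: a connected graph in which every triple of vertices has a unique
median.  (Median graphs are exactly the 1-skeleta of CAT(0) cube complexes.) -/
def IsMedianGraph {V : Type} (T : SimpleGraph V) : Prop :=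
  T.Connected ∧ ∀ x y z : V, ∃! w : V, IsMedianVertex T x y z w

/-- The corresponding cube complex is finite dimensional: there is a bound on the
dimension of hypercubes embedding into the graph. -/
def FinDimCubical {V : Type} (T : SimpleGraph V) : Prop :=
  ∃ n : ℕ, ∀ k : ℕ, Nonempty (HypercubeGraph k ↪g T) → k ≤ n

/-- Property FC′: every (cellular) action on a finite-dimensional CAT(0) cube complex —
encoded via its 1-skeleton, a finite-dimensional median graph — is locally elliptic,
i.e. every element has a bounded orbit (equivalently, a fixed point in the complex). -/
def HasFC' (Γ : Type) [Group Γ] : Prop :=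
  ∀ (V : Type) (T : SimpleGraph V), IsMedianGraph T → FinDimCubical T →
    ∀ ψ : Γ →* Equiv.Perm V, PreservesAdj T ψ →
      ∀ g : Γ, ∃ (v : V) (C : ℕ), ∀ n : ℤ, T.dist v (ψ (g ^ n) v) ≤ C

/-- The old Mathlib definition (removed since): a monoid is torsion free if no
nontrivial element has finite order. -/
def Monoid.IsTorsionFree (G : Type*) [Monoid G] : Prop :=
  ∀ g : G, g ≠ 1 → ¬IsOfFinOrder g


section UltralimAux

open Filter

variable {F : Type} [Group F] [Finite F]

omit [Group F] in
lemma ultralim_exists (U : Ultrafilter ℕ) (x : ℕ → F) :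
    ∃ v : F, {i | x i = v} ∈ U := by
  obtain ⟨v, hv⟩ := (U.map x).eq_pure_of_finite
  refine ⟨v, ?_⟩
  have : {v} ∈ U.map x := by rw [hv]; exact Ultrafilter.mem_pure.mpr rfl
  simpa [Ultrafilter.mem_map, Set.preimage, Set.mem_singleton_iff] using this

omit [Group F] [Finite F] in
lemma ultralim_unique (U : Ultrafilter ℕ) (x : ℕ → F) {v w : F}
    (hv : {i | x i = v} ∈ U) (hw : {i | x i = w} ∈ U) : v = w := by
  obtain ⟨i, h1, h2⟩ := U.nonempty_of_mem (inter_mem hv hw)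
  exact h1.symm.trans h2

noncomputable def ultralimHom (U : Ultrafilter ℕ) : (ℕ → F) →* F where
  toFun x := (ultralim_exists U x).choose
  map_one' := by
    have h1 : {i | (1 : ℕ → F) i = 1} ∈ U := by
      have : {i | (1 : ℕ → F) i = 1} = Set.univ := by ext; simp
      rw [this]; exact Filter.univ_mem
    exact ultralim_unique U 1 (ultralim_exists U 1).choose_spec h1
  map_mul' x y := by
    have hx := (ultralim_exists U x).choose_spec
    have hy := (ultralim_exists U y).choose_spec
    have hxy : {i | (x * y) i = (ultralim_exists U x).choose * (ultralim_exists U y).choose} ∈ U := by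
      filter_upwards [hx, hy] with i h1 h2
      simp [Pi.mul_apply, h1, h2]
    exact ultralim_unique U (x*y) (ultralim_exists U (x*y)).choose_spec hxy

lemma ultralimHom_spec (U : Ultrafilter ℕ) (x : ℕ → F) {v : F}
    (hv : {i | x i = v} ∈ U) : ultralimHom U x = v :=
  ultralim_unique U x (ultralim_exists U x).choose_spec hv

end UltralimAux

/-! **Statement 13.** Every lcH-slender group is torsion free. -/
theorem lcHSlender_torsionFree (H : Type) [Group H] (h : LcHSlender H) :
    Monoid.IsTorsionFree H := by
  letI : TopologicalSpace H := ⊥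
  haveI : DiscreteTopology H := ⟨rfl⟩
  intro g hg hfin
  set F := Subgroup.zpowers g with hF
  haveI : Finite F := Set.finite_coe_iff.mpr hfin.finite_zpowers
  letI : TopologicalSpace F := ⊥
  haveI : DiscreteTopology F := ⟨rfl⟩
  haveI : IsTopologicalGroup F :=
    { continuous_mul := continuous_of_discreteTopology
      continuous_inv := continuous_of_discreteTopology }
  letI : TopologicalSpace (ℕ → F) := Pi.topologicalSpace
  haveI : IsTopologicalGroup (ℕ → F) := Pi.topologicalGroup
  haveI : CompactSpace (ℕ → F) := by infer_instance
  haveI : LocallyCompactSpace (ℕ → F) := by infer_instance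
  haveI : T2Space (ℕ → F) := by infer_instance
  set U : Ultrafilter ℕ := Filter.hyperfilter ℕ
  set f : (ℕ → F) →* H := F.subtype.comp (ultralimHom U)
  have hcont := h (ℕ → F) f
  have hopen : IsOpen (f ⁻¹' {1}) := hcont.isOpen_preimage {1} (by trivial)
  have h1 : (1 : ℕ → F) ∈ f ⁻¹' {1} := by simp
  obtain ⟨I, u, hu, hsub⟩ := isOpen_pi_iff.mp hopen 1 h1
  set gF : F := ⟨g, Subgroup.mem_zpowers g⟩
  set x : ℕ → F := fun i => if i ∈ I then 1 else gF with hx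
  have hxmem : x ∈ (I : Set ℕ).pi u := by
    intro i hi
    simp only [hx, if_pos (by exact_mod_cast hi)]
    exact (hu i (by exact_mod_cast hi)).2
  have hfx1 : f x = 1 := hsub hxmem
  have hxg : {i | x i = gF} ∈ U := by
    have hss : ((I : Set ℕ))ᶜ ⊆ {i | x i = gF} := by
      intro i hi
      simp only [Set.mem_setOf_eq, hx, if_neg (by simpa using hi)]
    exact Filter.mem_of_superset ((I : Set ℕ).toFinite.compl_mem_hyperfilter) hss
  have hlim : ultralimHom U x = gF := ultralimHom_spec U x hxg
  have hfxg : f x = g := by simp [f, hlim, gF]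
  exact hg (by rw [← hfxg, hfx1])
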